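/- Let V be a 3×3 real orthogonal matrix (VᵀV = I) and set A := V·diag(1, −1, −1)·Vᵀ. Let S : ℝ → ℝ³ be a differentiable function with ‖S(x)‖ = 1 for all x, and set S̃(x) := A·S(x). Then for every x, S̃ × (S × S′) + S × (S̃ × S̃′) = (S + S̃)′, where × is the standard cross product on ℝ³ and ′ is the derivative in x. Consequently the term M₀ in the deformed Heisenberg ferromagnet model is local: M₀ = −a(S + S̃) satisfies M₀′ = −a·(S̃ × (S × S′) + S × (S̃ × S̃′)). -/

import Mathlib

/-!
Writing `v` for the first column of `V`, orthogonality of `V` gives `A = 2 v vᵀ - 1`, so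
`S̃ = 2 (v ⬝ S) v - S` and `S̃′ = A S′`. Expanding both double cross products by
`a × (b × c) = (a ⬝ c) b - (a ⬝ b) c` and using `S ⬝ S = 1`, `S ⬝ S′ = 0` (differentiate the
norm condition), the left-hand side collapses to `2 (v ⬝ S′) v = S′ + A S′ = (S + S̃)′`.
-/

open Matrix

section Calculus

variable {𝕜 : Type*} [NontriviallyNormedField 𝕜] {ι : Type*} [Fintype ι]
  {f g : 𝕜 → ι → 𝕜} {f' g' : ι → 𝕜} {x : 𝕜}

theorem HasDerivAt.dotProduct (hf : HasDerivAt f f' x) (hg : HasDerivAt g g' x) :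
    HasDerivAt (fun y => f y ⬝ᵥ g y) (f' ⬝ᵥ g x + f x ⬝ᵥ g') x := by
  rw [hasDerivAt_pi] at hf hg
  simpa only [_root_.dotProduct, ← Finset.sum_add_distrib] using
    HasDerivAt.fun_sum (u := Finset.univ) fun i _ => (hf i).fun_mul (hg i)

theorem HasDerivAt.const_mulVec {m : Type*} [Fintype m] (A : Matrix m ι 𝕜)
    (hf : HasDerivAt f f' x) : HasDerivAt (fun y => A *ᵥ f y) (A *ᵥ f') x :=
  hasDerivAt_pi.2 fun i => by
    simpa only [mulVec, _root_.dotProduct] using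
      HasDerivAt.fun_sum (u := Finset.univ) fun j _ => (hasDerivAt_pi.1 hf j).const_mul (A i j)

end Calculus

theorem dotProduct_eq_zero_of_hasDerivAt_of_dotProduct_self_eq {ι : Type*} [Fintype ι]
    {f : ℝ → ι → ℝ} {f' : ι → ℝ} {x c : ℝ} (hf : HasDerivAt f f' x)
    (hc : ∀ y, f y ⬝ᵥ f y = c) : f x ⬝ᵥ f' = 0 := by
  have h := (hf.dotProduct hf).unique (by simpa only [hc] using hasDerivAt_const x c)
  rw [dotProduct_comm f'] at h
  linarith

namespace Matrix

variable {R : Type*} [CommRing R]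

/-- For a unit vector `w`, the rotation by `π` about the axis `w`. -/
def halfTurn {n : Type*} [DecidableEq n] (w : n → R) : Matrix n n R :=
  (2 : R) • vecMulVec w w - 1

theorem halfTurn_mulVec {n : Type*} [Fintype n] [DecidableEq n] (w u : n → R) :
    halfTurn w *ᵥ u = (2 * (w ⬝ᵥ u)) • w - u := by
  simp [halfTurn, sub_mulVec, smul_mulVec, vecMulVec_mulVec, smul_smul, mul_comm]

theorem conj_diagonal_one_neg_one_neg_one_eq_halfTurn {V : Matrix (Fin 3) (Fin 3) R}
    (hV : Vᵀ * V = 1) : V * diagonal ![1, -1, -1] * Vᵀ = halfTurn (Vᵀ 0) := by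
  have hD : diagonal ![(1 : R), -1, -1] = (2 : R) • single 0 0 1 - 1 := by
    ext i j; fin_cases i <;> fin_cases j <;> norm_num
  have hsingle : V * single 0 0 1 * Vᵀ = vecMulVec (Vᵀ 0) (Vᵀ 0) := by
    ext i j; simp [mul_apply, single_apply, vecMulVec, ite_and]
  rw [hD, halfTurn, mul_sub, sub_mul, mul_one, mul_eq_one_comm.mp hV, Matrix.mul_smul,
    Matrix.smul_mul, hsingle]

theorem halfTurn_cross_cross_add_cross_halfTurn_cross (w s t : Fin 3 → R) (hs : s ⬝ᵥ s = 1)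
    (hst : s ⬝ᵥ t = 0) :
    (halfTurn w *ᵥ s) ⨯₃ (s ⨯₃ t) + s ⨯₃ ((halfTurn w *ᵥ s) ⨯₃ (halfTurn w *ᵥ t)) =
      t + halfTurn w *ᵥ t := by
  simp only [halfTurn_mulVec, cross_cross_eq_smul_sub_smul', sub_dotProduct, dotProduct_sub,
    smul_dotProduct, dotProduct_smul, smul_eq_mul, dotProduct_comm s w, hs, hst]
  module

end Matrix

/-- For `A = V·diag(1,−1,−1)·Vᵀ` with `V` orthogonal, `S̃ = A·S` and `S` of
unit Euclidean norm, one has `S̃ × (S × S′) + S × (S̃ × S̃′) = (S + S̃)′`;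
consequently `M₀ = −a(S + S̃)` is local and satisfies
`M₀′ = −a·(S̃ × (S × S′) + S × (S̃ × S̃′))`. -/
theorem ferromagnet_M0_local
    (V : Matrix (Fin 3) (Fin 3) ℝ) (hV : Vᵀ * V = 1)
    (A : Matrix (Fin 3) (Fin 3) ℝ)
    (hA : A = V * Matrix.diagonal ![1, -1, -1] * Vᵀ)
    (S St : ℝ → Fin 3 → ℝ)
    (hS : Differentiable ℝ S)
    (hnorm : ∀ x : ℝ, S x ⬝ᵥ S x = 1)
    (hSt : ∀ x : ℝ, St x = A.mulVec (S x))
    (a : ℝ) (M₀ : ℝ → Fin 3 → ℝ)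
    (hM₀ : ∀ x : ℝ, M₀ x = (-a) • (S x + St x)) :
    ∀ x : ℝ,
      crossProduct (St x) (crossProduct (S x) (deriv S x)) +
          crossProduct (S x) (crossProduct (St x) (deriv St x)) =
        deriv (fun y => S y + St y) x ∧
      deriv M₀ x =
        (-a) • (crossProduct (St x) (crossProduct (S x) (deriv S x)) +
          crossProduct (S x) (crossProduct (St x) (deriv St x))) := by
  intro x
  have hS' := (hS x).hasDerivAt
  have hSt' : HasDerivAt St (A *ᵥ deriv S x) x := by
    rw [funext hSt]
    exact hS'.const_mulVec A
  have hsum : HasDerivAt (fun y => S y + St y) (deriv S x + A *ᵥ deriv S x) x := hS'.add hSt'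
  have hM₀' : HasDerivAt M₀ ((-a) • (deriv S x + A *ᵥ deriv S x)) x := by
    rw [funext hM₀]
    exact hsum.const_smul (-a)
  have hcross : St x ⨯₃ (S x ⨯₃ deriv S x) + S x ⨯₃ (St x ⨯₃ deriv St x) =
      deriv S x + A *ᵥ deriv S x := by
    rw [hSt, hSt'.deriv, hA, conj_diagonal_one_neg_one_neg_one_eq_halfTurn hV]
    exact halfTurn_cross_cross_add_cross_halfTurn_cross _ _ _ (hnorm x)
      (dotProduct_eq_zero_of_hasDerivAt_of_dotProduct_self_eq hS' hnorm)
  rw [hsum.deriv, hM₀'.deriv, hcross]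
  exact ⟨rfl, rfl⟩
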